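/- Let u be a rich infinite word over a finite alphabet whose language is closed under reversal. Then every bispecial factor w of u satisfies: if w is non-palindromic then b(w) ≥ 0, and if w is a palindrome then b(w) ≥ #Pext(w) − 1. -/
import Mathlib


open List

/-- The factor of `u` of length `n` starting at position `i`. -/
def word {A : Type*} (u : ℕ → A) (i n : ℕ) : List A :=
  (List.range n).map (fun j => u (i + j))

/-- `w` occurs in `u` at position `i`. -/
def OccursAt {A : Type*} (u : ℕ → A) (w : List A) (i : ℕ) : Prop :=
  w = word u i w.length

/-- `w` is a factor of the infinite word `u`. -/
def IsFactor {A : Type*} (u : ℕ → A) (w : List A) : Prop :=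
  ∃ i, OccursAt u w i

/-- Every letter of the alphabet occurs in `u`. -/
def AllLettersOccur {A : Type*} (u : ℕ → A) : Prop :=
  ∀ a : A, ∃ i, u i = a

/-- The language of `u` is closed under reversal. -/
def ClosedUnderReversal {A : Type*} (u : ℕ → A) : Prop :=
  ∀ w : List A, IsFactor u w → IsFactor u w.reverse

/-- `u` is uniformly recurrent: every factor occurs in every window of some
bounded length. -/
def UniformlyRecurrent {A : Type*} (u : ℕ → A) : Prop :=
  ∀ w : List A, IsFactor u w → ∃ N : ℕ, ∀ i : ℕ, ∃ j : ℕ,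
    i ≤ j ∧ j < i + N ∧ OccursAt u w j

/-- Factor complexity: the number of factors of `u` of length `n`. -/
noncomputable def complexity {A : Type*} (u : ℕ → A) (n : ℕ) : ℕ :=
  Set.ncard {w : List A | w.length = n ∧ IsFactor u w}

/-- Palindromic complexity: the number of palindromic factors of `u` of
length `n`. -/
noncomputable def palComplexity {A : Type*} (u : ℕ → A) (n : ℕ) : ℕ :=
  Set.ncard {w : List A | w.length = n ∧ IsFactor u w ∧ w.reverse = w}

/-- The number of distinct palindromic factors of a finite word
(the empty word included). -/
noncomputable def palCount {A : Type*} (w : List A) : ℕ :=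
  Set.ncard {v : List A | v <:+: w ∧ v.reverse = v}

/-- `u` is rich in palindromes. -/
def Rich {A : Type*} (u : ℕ → A) : Prop :=
  ∀ w : List A, IsFactor u w → palCount w = w.length + 1

/-- `j < k` are two successive occurrences of `w` in `u`. -/
def SuccOccurrences {A : Type*} (u : ℕ → A) (w : List A) (j k : ℕ) : Prop :=
  OccursAt u w j ∧ OccursAt u w k ∧ j < k ∧
    ∀ l : ℕ, j < l → l < k → ¬ OccursAt u w l

/-- The set of return words of the factor `w` in `u`. -/
def returnWords {A : Type*} (u : ℕ → A) (w : List A) : Set (List A) :=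
  {v | ∃ j k : ℕ, SuccOccurrences u w j k ∧ v = word u j (k - j)}

/-- Left extensions of `w` in `u`. -/
def Lext {A : Type*} (u : ℕ → A) (w : List A) : Set A :=
  {a | IsFactor u (a :: w)}

/-- Right extensions of `w` in `u`. -/
def Rext {A : Type*} (u : ℕ → A) (w : List A) : Set A :=
  {b | IsFactor u (w ++ [b])}

/-- Bilateral extensions of `w` in `u`. -/
def Bext {A : Type*} (u : ℕ → A) (w : List A) : Set (A × A) :=
  {p | IsFactor u (p.1 :: (w ++ [p.2]))}

/-- Palindromic extensions of a (palindromic) factor `w` of `u`. -/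
def Pext {A : Type*} (u : ℕ → A) (w : List A) : Set (List A) :=
  {v | ∃ a : A, v = a :: (w ++ [a]) ∧ IsFactor u v}

/-- `w` is a bispecial factor of `u`. -/
def Bispecial {A : Type*} (u : ℕ → A) (w : List A) : Prop :=
  IsFactor u w ∧ 2 ≤ Set.ncard (Lext u w) ∧ 2 ≤ Set.ncard (Rext u w)

/-- The bilateral order of a factor `w` of `u`. -/
noncomputable def bilateralOrder {A : Type*} (u : ℕ → A) (w : List A) : ℤ :=
  (Set.ncard (Bext u w) : ℤ) - Set.ncard (Rext u w) - Set.ncard (Lext u w) + 1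

/-- `u` is eventually periodic. -/
def EventuallyPeriodic {A : Type*} (u : ℕ → A) : Prop :=
  ∃ p : ℕ, 0 < p ∧ ∃ N : ℕ, ∀ n : ℕ, N ≤ n → u (n + p) = u n

/-- `u` is aperiodic. -/
def Aperiodic {A : Type*} (u : ℕ → A) : Prop :=
  ¬ EventuallyPeriodic u

/-- `u` is (1-)balanced. -/
def IsBalanced {A : Type*} [DecidableEq A] (u : ℕ → A) : Prop :=
  ∀ a : A, ∀ w v : List A, IsFactor u w → IsFactor u v → w.length = v.length →
    |(w.count a : ℤ) - (v.count a : ℤ)| ≤ 1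

section API
variable {A : Type*} {u : ℕ → A}

@[simp] lemma word_length (u : ℕ → A) (i n : ℕ) : (word u i n).length = n := by
  simp [word]

lemma word_append (u : ℕ → A) (i m n : ℕ) :
    word u i (m + n) = word u i m ++ word u (i + m) n := by
  unfold word
  rw [List.range_add, List.map_append, List.map_map]
  congr 1
  apply List.map_congr_left
  intro x _
  simp [add_assoc, add_comm, add_left_comm]

lemma occursAt_word (u : ℕ → A) (i n : ℕ) : OccursAt u (word u i n) i := by
  simp [OccursAt]

lemma isFactor_word (u : ℕ → A) (i n : ℕ) : IsFactor u (word u i n) := ⟨i, occursAt_word u i n⟩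

lemma occursAt_append_iff {s t : List A} {i : ℕ} :
    OccursAt u (s ++ t) i ↔ OccursAt u s i ∧ OccursAt u t (i + s.length) := by
  unfold OccursAt
  constructor
  · intro h
    rw [List.length_append, word_append] at h
    have := List.append_inj h (by simp)
    exact ⟨this.1, this.2⟩
  · rintro ⟨h1, h2⟩
    rw [List.length_append, word_append, ← h1, ← h2]

lemma occursAt_cons_iff {a : A} {t : List A} {i : ℕ} :
    OccursAt u (a :: t) i ↔ u i = a ∧ OccursAt u t (i + 1) := by
  have h : a :: t = [a] ++ t := rfl
  rw [h, occursAt_append_iff]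
  have h2 : OccursAt u [a] i ↔ u i = a := by
    unfold OccursAt
    simp [word, List.range_succ]
    constructor
    · intro h; exact h.symm
    · intro h; exact h.symm
  rw [h2]
  simp

lemma occursAt_length_eq {x y : List A} {i : ℕ} (hx : OccursAt u x i) (hy : OccursAt u y i)
    (h : x.length = y.length) : x = y := by
  rw [hx, hy, h]

lemma isFactor_infix {v r : List A} (h : v <:+: r) (hr : IsFactor u r) : IsFactor u v := by
  obtain ⟨s, t, hst⟩ := h
  obtain ⟨i, hi⟩ := hr
  subst hst
  have h1 := (occursAt_append_iff.1 hi).1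
  exact ⟨i + s.length, (occursAt_append_iff.1 h1).2⟩

lemma occursAt_prefix {x y : List A} {i : ℕ} (hx : OccursAt u x i) (hy : y <+: x) :
    OccursAt u y i := by
  obtain ⟨t, ht⟩ := hy
  subst ht
  exact (occursAt_append_iff.1 hx).1

lemma occursAt_suffix {x y : List A} {i : ℕ} (hx : OccursAt u x i) (hy : y <:+ x) :
    OccursAt u y (i + (x.length - y.length)) := by
  obtain ⟨s, hs⟩ := hy
  subst hs
  have h1 := (occursAt_append_iff.1 hx).2
  have hl : (s ++ y).length - y.length = s.length := by simp
  rwa [hl]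

/-- decomposition of a `word` around an inner occurrence -/
lemma word_eq_three {v : List A} {i n l : ℕ} (hv : OccursAt u v l) (h1 : i ≤ l)
    (h2 : l + v.length ≤ i + n) :
    ∃ s t : List A, word u i n = s ++ v ++ t ∧ s.length = l - i ∧
      t.length = i + n - (l + v.length) := by
  refine ⟨word u i (l - i), word u (l + v.length) (i + n - (l + v.length)), ?_, by simp, by simp⟩
  have h3 : word u i n = word u i ((l - i) + (v.length + (i + n - (l + v.length)))) := by
    congr 1; omega
  rw [h3, word_append, word_append]
  have h4 : i + (l - i) = l := by omega
  rw [h4, ← hv, List.append_assoc]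

lemma infix_of_occursAt {v r : List A} {i l : ℕ} (hr : OccursAt u r i) (hv : OccursAt u v l)
    (h1 : i ≤ l) (h2 : l + v.length ≤ i + r.length) : v <:+: r := by
  obtain ⟨s, t, h, -, -⟩ := word_eq_three (u := u) hv h1 h2
  exact ⟨s, t, by rw [hr]; exact h.symm⟩

lemma suffix_of_occursAt {v r : List A} {i l : ℕ} (hr : OccursAt u r i) (hv : OccursAt u v l)
    (h1 : i ≤ l) (h2 : l + v.length = i + r.length) : v <:+ r := by
  obtain ⟨s, t, h, -, htl⟩ := word_eq_three (u := u) hv h1 (le_of_eq h2)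
  have ht : t = [] := by
    have : t.length = 0 := by omega
    exact List.length_eq_zero_iff.1 this
  subst ht
  exact ⟨s, by rw [hr, h]; simp⟩

lemma prefix_of_occursAt {v r : List A} {i : ℕ} (hr : OccursAt u r i) (hv : OccursAt u v i)
    (h2 : v.length ≤ r.length) : v <+: r := by
  obtain ⟨k, hk⟩ : ∃ k, r.length = v.length + k := ⟨r.length - v.length, by omega⟩
  refine ⟨word u (i + v.length) k, ?_⟩
  rw [hr, hk, word_append, ← hv]

end API
section Rec
variable {A : Type*} {u : ℕ → A}

lemma rev_word_occ {v : List A} {l i n k : ℕ} (hv : OccursAt u v l) (h1 : i ≤ l)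
    (h2 : l + v.length ≤ i + n) (hk : OccursAt u (word u i n).reverse k) :
    OccursAt u v.reverse (k + (i + n - (l + v.length))) := by
  obtain ⟨s, t, h, hsl, htl⟩ := word_eq_three (u := u) hv h1 h2
  rw [h] at hk
  have hrev : (s ++ v ++ t).reverse = t.reverse ++ (v.reverse ++ s.reverse) := by simp
  rw [hrev] at hk
  have h3 := (occursAt_append_iff.1 hk).2
  have h4 := (occursAt_append_iff.1 h3).1
  rwa [List.length_reverse, htl] at h4

lemma prefix_occurs_pos (hcur : ClosedUnderReversal u) (n : ℕ) :
    ∃ i, 1 ≤ i ∧ OccursAt u (word u 0 n) i := by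
  obtain ⟨j, hj⟩ := hcur (word u 0 n) (isFactor_word u 0 n)
  obtain ⟨k, hk⟩ := hcur (word u 0 (j + n + 1)) (isFactor_word u 0 (j + n + 1))
  have hlen : (word u 0 n).reverse.length = n := by simp
  have h := rev_word_occ (u := u) (v := (word u 0 n).reverse) (l := j) (i := 0)
    (n := j + n + 1) (k := k) hj (by omega) (by rw [hlen]; omega) hk
  rw [List.reverse_reverse] at h
  rw [hlen] at h
  have hpos : 0 + (j + n + 1) - (j + n) = 1 := by omega
  rw [hpos] at h
  exact ⟨k + 1, by omega, h⟩

lemma recur (hcur : ClosedUnderReversal u) {v : List A} (hv : IsFactor u v) :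
    ∀ N, ∃ i, N ≤ i ∧ OccursAt u v i := by
  intro N
  induction N with
  | zero =>
    obtain ⟨i0, hi0⟩ := hv
    exact ⟨i0, by omega, hi0⟩
  | succ N ih =>
    obtain ⟨i, hNi, hi⟩ := ih
    obtain ⟨q, hq1, hq⟩ := prefix_occurs_pos hcur (i + v.length)
    have hsplit : word u 0 (i + v.length) = word u 0 i ++ v := by
      rw [word_append]
      congr 1
      rw [Nat.zero_add]
      exact hi.symm
    rw [hsplit] at hq
    have h2 := (occursAt_append_iff.1 hq).2
    rw [word_length] at h2
    exact ⟨q + i, by omega, h2⟩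

end Rec
section Lps
variable {A : Type*} {u : ℕ → A}

lemma lpsUni (hrich : Rich u) {f : List A} (hf : IsFactor u f) (hne : f ≠ []) :
    ∃ q : List A, q.reverse = q ∧ q ≠ [] ∧ q <:+ f ∧
      ∀ s t : List A, f = s ++ q ++ t → t = [] := by
  have hsplit : f.dropLast ++ [f.getLast hne] = f := List.dropLast_append_getLast hne
  set f' := f.dropLast with hf'def
  have hf'inf : f' <:+: f := (List.dropLast_prefix f).isInfix
  have hf'fac : IsFactor u f' := isFactor_infix hf'inf hf
  have hlen : f.length = f'.length + 1 := by
    conv_lhs => rw [← hsplit]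
    simp
  have hP : palCount f = f.length + 1 := hrich f hf
  have hP' : palCount f' = f'.length + 1 := hrich f' hf'fac
  have hsub : {v : List A | v <:+: f' ∧ v.reverse = v} ⊆ {v | v <:+: f ∧ v.reverse = v} :=
    fun v hv => ⟨hv.1.trans hf'inf, hv.2⟩
  have hne2 : ¬ ({v : List A | v <:+: f ∧ v.reverse = v} ⊆
      {v | v <:+: f' ∧ v.reverse = v}) := by
    intro hss
    have heq : {v : List A | v <:+: f ∧ v.reverse = v} = {v | v <:+: f' ∧ v.reverse = v} :=
      Set.Subset.antisymm hss hsub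
    have hcard := congrArg Set.ncard heq
    unfold palCount at hP hP'
    rw [hcard] at hP
    omega
  obtain ⟨q, hqS, hqnS⟩ := Set.not_subset.1 hne2
  obtain ⟨hqinf, hqpal⟩ := hqS
  have hkey : ∀ s t : List A, f = s ++ q ++ t → t = [] := by
    intro s t hst
    by_contra htne
    apply hqnS
    refine ⟨?_, hqpal⟩
    obtain ⟨b, t', hbt⟩ := List.exists_cons_of_ne_nil htne
    subst hbt
    have hdl : f' = (s ++ q) ++ List.dropLast (b :: t') := by
      rw [hf'def, hst, List.dropLast_append_cons]
    exact ⟨s, List.dropLast (b :: t'), by rw [hdl, List.append_assoc]⟩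
  have hqne : q ≠ [] := by
    intro h
    exact hqnS (by rw [h]; exact ⟨List.nil_infix, List.reverse_nil⟩)
  obtain ⟨s, t, hst⟩ := hqinf
  have ht := hkey s t hst.symm
  subst ht
  refine ⟨q, hqpal, hqne, ⟨s, by simpa using hst⟩, hkey⟩

end Lps
section CR
variable {A : Type*} {u : ℕ → A}

lemma suffix_of_suffix_le {x y z : List A} (hx : x <:+ z) (hy : y <:+ z)
    (h : x.length ≤ y.length) : x <:+ y := by
  have hx' : x.reverse <+: z.reverse := List.reverse_prefix.2 hx
  have hy' : y.reverse <+: z.reverse := List.reverse_prefix.2 hy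
  have := List.prefix_of_prefix_length_le hx' hy' (by simpa using h)
  have h2 : x.reverse.reverse <:+ y.reverse.reverse := List.reverse_suffix.2 this
  simpa using h2

lemma occursAt_single (u : ℕ → A) (l : ℕ) : OccursAt u [u l] l := by
  simp [OccursAt, word, List.range_succ]

lemma pal_letter {r : List A} {i t : ℕ} (hr : OccursAt u r i) (hpal : r.reverse = r)
    (ht : t < r.length) : u (i + (r.length - t - 1)) = u (i + t) := by
  have h1 : OccursAt u [u (i + t)] (i + t) := occursAt_single u (i + t)
  have hk : OccursAt u (word u i r.length).reverse i := by
    rw [← hr, hpal]; exact hr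
  have h2 := rev_word_occ (u := u) (n := r.length) h1 (by omega) (by simp; omega) hk
  rw [List.reverse_singleton] at h2
  have h4 := (occursAt_cons_iff.1 h2).1
  have h5 : i + (i + r.length - (i + t + [u (i + t)].length)) = i + (r.length - t - 1) := by
    simp; omega
  rw [h5] at h4
  exact h4

lemma CRkey (hrich : Rich u) {v : List A} {j k : ℕ}
    (hvj : OccursAt u v j) (hvk : OccursAt u v.reverse k) (hjk : j < k)
    (hno1 : ∀ l, j < l → l < k → ¬ OccursAt u v l) :
    u (j + v.length) = u (k - 1) := by
  set n := v.length with hn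
  set R := k - j + n with hR
  set r := word u j R with hrdef
  have hrocc : OccursAt u r j := occursAt_word u j R
  have hrlen : r.length = R := word_length u j R
  have hrfac : IsFactor u r := isFactor_word u j R
  have hrne : r ≠ [] := by
    intro h
    have := congrArg List.length h
    rw [hrlen] at this
    simp at this
    omega
  obtain ⟨q, hqpal, hqne, hqsuf, hquni⟩ := lpsUni hrich hrfac hrne
  have huni : ∀ l, j ≤ l → l + q.length ≤ j + R → OccursAt u q l → l + q.length = j + R := by
    intro l h1 h2 hocc
    obtain ⟨s, t, hdec, hsl, htl⟩ := word_eq_three (u := u) (n := R) hocc h1 (by omega)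
    have ht0 := hquni s t (by rw [hrdef]; exact hdec)
    rw [ht0] at htl
    simp at htl
    omega
  have hql : q.length ≤ R := by
    have := hqsuf.length_le
    omega
  have hqocc : OccursAt u q (j + (R - q.length)) := by
    have h0 := occursAt_suffix hrocc hqsuf
    rwa [hrlen] at h0
  have hvrsuf : v.reverse <:+ r := by
    refine suffix_of_occursAt hrocc hvk (by omega) ?_
    rw [hrlen, List.length_reverse]
    omega
  rcases lt_trichotomy q.length n with hlt | heq | hgt
  · -- q.length < n : contradiction
    have h1 : q <:+ v.reverse := suffix_of_suffix_le hqsuf hvrsuf (by simp; omega)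
    rw [← hqpal] at h1
    have h2 : q <+: v := List.reverse_suffix.1 h1
    have h3 : OccursAt u q j := occursAt_prefix hvj h2
    have := huni j le_rfl (by omega) h3
    omega
  · -- q.length = n : contradiction
    have h2 : q <:+ v.reverse := suffix_of_suffix_le hqsuf hvrsuf (by simp; omega)
    have h1 : q = v.reverse := h2.eq_of_length (by simp; omega)
    have hvpal : v.reverse = v := by
      have h3 := hqpal
      rw [h1] at h3
      simpa using h3.symm
    have h4 : OccursAt u q j := by
      rw [h1, hvpal]
      exact hvj
    have := huni j le_rfl (by omega) h4
    omega
  · by_cases hqR : q.length = R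
    · -- q = r : palindrome, extract letter
      have h1 : q = r := hqsuf.eq_of_length (by omega)
      have hrpal : r.reverse = r := by
        rw [← h1]
        exact hqpal
      have h2 := pal_letter hrocc hrpal (t := n) (by omega)
      have harith : j + (r.length - n - 1) = k - 1 := by omega
      rw [harith] at h2
      exact h2.symm
    · -- n < q.length < R : inner occurrence of v, contradiction
      have hqlt : q.length < R := lt_of_le_of_ne hql hqR
      have h1 : v.reverse <:+ q := suffix_of_suffix_le hvrsuf hqsuf (by simp; omega)
      have h1' : v.reverse <:+ q.reverse := by rw [hqpal]; exact h1
      have h2 : v <+: q := List.reverse_suffix.1 h1'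
      have h3 : OccursAt u v (j + (R - q.length)) := occursAt_prefix hqocc h2
      exact absurd h3 (hno1 _ (by omega) (by omega))

lemma CR3 (hrich : Rich u) {v : List A} {j k : ℕ} (hvnp : v.reverse ≠ v)
    (hvj : OccursAt u v j) (hvk : OccursAt u v k) (hjk : j < k)
    (hno2 : ∀ l, j ≤ l → l ≤ k → ¬ OccursAt u v.reverse l) : False := by
  set n := v.length with hn
  set R := k - j + n with hR
  set r := word u j R with hrdef
  have hrocc : OccursAt u r j := occursAt_word u j R
  have hrlen : r.length = R := word_length u j R
  have hrfac : IsFactor u r := isFactor_word u j R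
  have hvne : v ≠ [] := by
    intro h
    apply hno2 j le_rfl (by omega)
    rw [h] at hvj ⊢
    simpa using hvj
  have hrne : r ≠ [] := by
    intro h
    have := congrArg List.length h
    rw [hrlen] at this
    simp at this
    omega
  obtain ⟨q, hqpal, hqne, hqsuf, hquni⟩ := lpsUni hrich hrfac hrne
  have huni : ∀ l, j ≤ l → l + q.length ≤ j + R → OccursAt u q l → l + q.length = j + R := by
    intro l h1 h2 hocc
    obtain ⟨s, t, hdec, hsl, htl⟩ := word_eq_three (u := u) (n := R) hocc h1 (by omega)
    have ht0 := hquni s t (by rw [hrdef]; exact hdec)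
    rw [ht0] at htl
    simp at htl
    omega
  have hql : q.length ≤ R := by
    have := hqsuf.length_le
    omega
  have hqocc : OccursAt u q (j + (R - q.length)) := by
    have h0 := occursAt_suffix hrocc hqsuf
    rwa [hrlen] at h0
  have hvsuf : v <:+ r := by
    refine suffix_of_occursAt hrocc hvk (by omega) ?_
    rw [hrlen]
    omega
  rcases lt_trichotomy q.length n with hlt | heq | hgt
  · -- q.length < n : q is a suffix of v, occurs inside the prefix copy of v
    have h1 : q <:+ v := suffix_of_suffix_le hqsuf hvsuf (by omega)
    have h2 := occursAt_suffix hvj h1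
    have := huni (j + (v.length - q.length)) (by omega) (by omega) h2
    omega
  · -- q.length = n : q = v, so v is a palindrome, contradiction
    have h1 : q <:+ v := suffix_of_suffix_le hqsuf hvsuf (by omega)
    have h2 : q = v := h1.eq_of_length (by omega)
    apply hvnp
    rw [← h2, hqpal]
  · -- n < q.length : v.reverse occurs in [j,k]
    have h1 : v <:+ q := suffix_of_suffix_le hvsuf hqsuf (by omega)
    have h1' : v.reverse <+: q.reverse := List.reverse_prefix.2 h1
    have h2 : v.reverse <+: q := by rwa [hqpal] at h1'
    have h3 : OccursAt u v.reverse (j + (R - q.length)) := occursAt_prefix hqocc h2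
    exact hno2 _ (by omega) (by omega) h3

end CR
section Count
variable {V : Type*} [DecidableEq V]

lemma chainCount2 (e : ℕ → V × V) (S : Finset V) (F : Finset (V × V))
    (hF : ∀ m, e m ∈ F) (hFsym : ∀ p ∈ F, (p.2, p.1) ∈ F)
    (hends : ∀ m, (e m).1 ∈ S ∧ (e m).2 ∈ S)
    (hsh : ∀ m, (e m).1 = (e (m + 1)).1 ∨ (e m).1 = (e (m + 1)).2 ∨
      (e m).2 = (e (m + 1)).1 ∨ (e m).2 = (e (m + 1)).2)
    (hcov : ∀ v ∈ S, ∃ m, (e m).1 = v ∨ (e m).2 = v) :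
    2 * S.card ≤ (F.filter (fun p => p.1 ≠ p.2)).card + 2 := by
  classical
  set P : V → ℕ → Prop := fun v m => (e m).1 = v ∨ (e m).2 = v with hPdef
  set f : V → ℕ := fun v => if h : ∃ m, P v m then Nat.find h else 0 with hfdef
  have hfP : ∀ v ∈ S, P v (f v) := by
    intro v hv
    have h : ∃ m, P v m := hcov v hv
    simp only [hfdef, dif_pos h]
    exact Nat.find_spec h
  have hfle : ∀ v ∈ S, ∀ m, P v m → f v ≤ m := by
    intro v hv m hm
    have h : ∃ m, P v m := ⟨m, hm⟩
    simp only [hfdef, dif_pos h]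
    exact Nat.find_le hm
  have hshared : ∀ m, 1 ≤ m → ∃ z, (z = (e m).1 ∨ z = (e m).2) ∧ z ∈ S ∧ f z < m := by
    intro m hm
    obtain ⟨m', rfl⟩ : ∃ m', m = m' + 1 := ⟨m - 1, by omega⟩
    rcases hsh m' with h | h | h | h
    · exact ⟨(e m').1, Or.inl h, (hends m').1,
        lt_of_le_of_lt (hfle _ (hends m').1 m' (Or.inl rfl)) (by omega)⟩
    · exact ⟨(e m').1, Or.inr h, (hends m').1,
        lt_of_le_of_lt (hfle _ (hends m').1 m' (Or.inl rfl)) (by omega)⟩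
    · exact ⟨(e m').2, Or.inl h, (hends m').2,
        lt_of_le_of_lt (hfle _ (hends m').2 m' (Or.inr rfl)) (by omega)⟩
    · exact ⟨(e m').2, Or.inr h, (hends m').2,
        lt_of_le_of_lt (hfle _ (hends m').2 m' (Or.inr rfl)) (by omega)⟩
  -- e (f v) is not a loop when f v ≥ 1
  have hnl : ∀ v ∈ S, 1 ≤ f v → (e (f v)).1 ≠ (e (f v)).2 := by
    intro v hv h1 hloop
    obtain ⟨z, hz1, hzS, hzlt⟩ := hshared (f v) h1
    have hPv := hfP v hv
    have hzv : z = v := by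
      rcases hPv with h | h <;> rcases hz1 with rfl | rfl
      · exact h
      · rw [← hloop]; exact h
      · rw [hloop]; exact h
      · exact h
    rw [hzv] at hzlt
    omega
  -- distinct vertices have distinct first indices, unless both are 0
  have hinj : ∀ v ∈ S, ∀ v' ∈ S, v ≠ v' → f v = f v' → f v = 0 := by
    intro v hv v' hv' hne hEq
    by_contra h0
    have h1 : 1 ≤ f v := by omega
    obtain ⟨z, hz1, hzS, hzlt⟩ := hshared (f v) h1
    have hPv := hfP v hv
    have hPv' := hfP v' hv'
    rw [← hEq] at hPv'
    have hfz : f z = f v := by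
      rcases hPv with h | h <;> rcases hPv' with h' | h' <;> rcases hz1 with rfl | rfl <;>
        first
          | (exact absurd (h.symm.trans h') hne)
          | (rw [h]) | (rw [h', hEq]) | (rw [h]; rfl) | (rw [h']; rw [hEq])
    omega
  -- later first-index edges differ from earlier edges and their swaps
  have hlater : ∀ v ∈ S, ∀ v' ∈ S, f v < f v' →
      e (f v') ≠ e (f v) ∧ e (f v') ≠ ((e (f v)).2, (e (f v)).1) := by
    intro v hv v' hv' hlt
    constructor
    · intro hc
      have hPv' := hfP v' hv'
      simp only [hPdef] at hPv'
      rw [hc] at hPv'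
      have := hfle v' hv' (f v) hPv'
      omega
    · intro hc
      have hPv' := hfP v' hv'
      simp only [hPdef] at hPv'
      rw [hc] at hPv'
      have h2 : P v' (f v) := by
        simp only [hPdef]
        rcases hPv' with h | h
        · exact Or.inr h
        · exact Or.inl h
      have := hfle v' hv' (f v) h2
      omega
  set Fnl := F.filter (fun p => p.1 ≠ p.2) with hFnl
  set Z := S.filter (fun v => f v = 0) with hZ
  set T := S.filter (fun v => f v ≠ 0) with hT
  have hST : Z.card + T.card = S.card := Finset.card_filter_add_card_filter_not _
  set g : V → Finset (V × V) := fun v => {e (f v), ((e (f v)).2, (e (f v)).1)} with hg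
  have hgsub : ∀ v ∈ T, g v ⊆ Fnl := by
    intro v hv
    have hvS : v ∈ S := (Finset.mem_filter.1 hv).1
    have hv1 : 1 ≤ f v := by
      have := (Finset.mem_filter.1 hv).2; omega
    have hnlv := hnl v hvS hv1
    intro x hx
    rcases Finset.mem_insert.1 hx with rfl | hx'
    · exact Finset.mem_filter.2 ⟨hF _, hnlv⟩
    · rw [Finset.mem_singleton] at hx'
      subst hx'
      exact Finset.mem_filter.2 ⟨hFsym _ (hF _), fun hc => hnlv hc.symm⟩
  have hgcard : ∀ v ∈ T, (g v).card = 2 := by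
    intro v hv
    have hvS : v ∈ S := (Finset.mem_filter.1 hv).1
    have hv1 : 1 ≤ f v := by
      have := (Finset.mem_filter.1 hv).2; omega
    have hnlv := hnl v hvS hv1
    rw [hg]
    rw [Finset.card_insert_of_notMem, Finset.card_singleton]
    rw [Finset.mem_singleton]
    intro hc
    exact hnlv (congrArg Prod.fst hc)
  have hgdisj' : ∀ v ∈ S, ∀ v' ∈ S, f v < f v' → Disjoint (g v) (g v') := by
    intro v hv v' hv' hlt
    rw [Finset.disjoint_right]
    intro x hx hx'
    obtain ⟨hn1, hn2⟩ := hlater v hv v' hv' hlt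
    rcases Finset.mem_insert.1 hx with rfl | hx1
    · rcases Finset.mem_insert.1 hx' with hc | hc
      · exact hn1 hc
      · rw [Finset.mem_singleton] at hc
        exact hn2 hc
    · rw [Finset.mem_singleton] at hx1
      subst hx1
      rcases Finset.mem_insert.1 hx' with hc | hc
      · exact hn2 (Prod.ext (congrArg Prod.snd hc) (congrArg Prod.fst hc))
      · rw [Finset.mem_singleton] at hc
        exact hn1 (Prod.ext (congrArg Prod.snd hc) (congrArg Prod.fst hc))
  have hgdisj : ∀ v ∈ T, ∀ v' ∈ T, v ≠ v' → Disjoint (g v) (g v') := by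
    intro v hv v' hv' hne
    have hvS : v ∈ S := (Finset.mem_filter.1 hv).1
    have hv'S : v' ∈ S := (Finset.mem_filter.1 hv').1
    rcases lt_trichotomy (f v) (f v') with h | h | h
    · exact hgdisj' v hvS v' hv'S h
    · exfalso
      have := hinj v hvS v' hv'S hne h
      have := (Finset.mem_filter.1 hv).2
      omega
    · exact (hgdisj' v' hv'S v hvS h).symm
  have hbiU : (T.biUnion g).card = 2 * T.card := by
    rw [Finset.card_biUnion hgdisj]
    rw [Finset.sum_congr rfl hgcard]
    rw [Finset.sum_const, smul_eq_mul, mul_comm]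
  have hbiUsub : T.biUnion g ⊆ Fnl := by
    intro x hx
    obtain ⟨v, hv, hxv⟩ := Finset.mem_biUnion.1 hx
    exact hgsub v hv hxv
  by_cases h0 : (e 0).1 = (e 0).2
  · -- e 0 is a loop : Z has at most 1 element
    have hZ1 : Z.card ≤ 1 := by
      apply Finset.card_le_one.2
      intro a ha b hb
      have hPa := hfP a (Finset.mem_filter.1 ha).1
      have hPb := hfP b (Finset.mem_filter.1 hb).1
      rw [(Finset.mem_filter.1 ha).2] at hPa
      rw [(Finset.mem_filter.1 hb).2] at hPb
      rcases hPa with h | h <;> rcases hPb with h' | h'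
      · rw [← h, ← h']
      · rw [← h, ← h']; exact h0
      · rw [← h, ← h']; exact h0.symm
      · rw [← h, ← h']
    have h2T : 2 * T.card ≤ Fnl.card := by
      rw [← hbiU]
      exact Finset.card_le_card hbiUsub
    omega
  · -- e 0 is not a loop
    have hE0 : ({e 0, ((e 0).2, (e 0).1)} : Finset (V × V)) ⊆ Fnl := by
      intro x hx
      rcases Finset.mem_insert.1 hx with rfl | hx'
      · exact Finset.mem_filter.2 ⟨hF 0, h0⟩
      · rw [Finset.mem_singleton] at hx'
        subst hx'
        exact Finset.mem_filter.2 ⟨hFsym _ (hF 0), fun hc => h0 hc.symm⟩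
    have hE0card : ({e 0, ((e 0).2, (e 0).1)} : Finset (V × V)).card = 2 := by
      rw [Finset.card_insert_of_notMem, Finset.card_singleton]
      rw [Finset.mem_singleton]
      intro hc
      exact h0 (congrArg Prod.fst hc)
    have hZ2 : Z.card ≤ 2 := by
      have hsub : Z ⊆ {(e 0).1, (e 0).2} := by
        intro a ha
        have hPa := hfP a (Finset.mem_filter.1 ha).1
        rw [(Finset.mem_filter.1 ha).2] at hPa
        rcases hPa with h | h
        · exact Finset.mem_insert.2 (Or.inl h.symm)
        · exact Finset.mem_insert.2 (Or.inr (Finset.mem_singleton.2 h.symm))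
      calc Z.card ≤ ({(e 0).1, (e 0).2} : Finset V).card := Finset.card_le_card hsub
        _ ≤ 2 := Finset.card_insert_le _ _ |>.trans (by simp)
    have hdisj0 : Disjoint (T.biUnion g) ({e 0, ((e 0).2, (e 0).1)} : Finset (V × V)) := by
      rw [Finset.disjoint_left]
      intro x hx hx'
      obtain ⟨v, hv, hxv⟩ := Finset.mem_biUnion.1 hx
      have hvS : v ∈ S := (Finset.mem_filter.1 hv).1
      have hv1 : 1 ≤ f v := by
        have := (Finset.mem_filter.1 hv).2; omega
      have hf0 : f ((e 0).1) = 0 := by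
        have := hfle ((e 0).1) (hends 0).1 0 (Or.inl rfl)
        omega
      have hlt : f ((e 0).1) < f v := by omega
      have hd := hgdisj' ((e 0).1) (hends 0).1 v hvS hlt
      rw [Finset.disjoint_right] at hd
      apply hd hxv
      rw [hg]
      simp only [hf0]
      exact hx'
    have hcardU : 2 * T.card + 2 ≤ Fnl.card := by
      have := Finset.card_le_card (Finset.union_subset hbiUsub hE0)
      rw [Finset.card_union_of_disjoint hdisj0] at this
      omega
    omega

end Count
section Main
variable {A : Type*} {u : ℕ → A}

lemma rev_ext (a b : A) (v : List A) : (a :: (v ++ [b])).reverse = b :: (v.reverse ++ [a]) := by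
  simp

lemma ext_occ {i : ℕ} (hi : 1 ≤ i) {v : List A} (hocc : OccursAt u v i) :
    OccursAt u (u (i - 1) :: (v ++ [u (i + v.length)])) (i - 1) := by
  rw [occursAt_cons_iff]
  refine ⟨rfl, ?_⟩
  rw [occursAt_append_iff]
  have h2 : i - 1 + 1 = i := by omega
  rw [h2]
  refine ⟨hocc, ?_⟩
  exact occursAt_single u (i + v.length)

lemma bext_mem_ext {w : List A} {p : A × A} (hp : p ∈ Bext u w) :
    p.1 ∈ Lext u w ∧ p.2 ∈ Rext u w := by
  have hfac : IsFactor u (p.1 :: (w ++ [p.2])) := hp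
  constructor
  · have heq : p.1 :: (w ++ [p.2]) = (p.1 :: w) ++ [p.2] := by simp
    rw [heq] at hfac
    exact isFactor_infix (List.prefix_append _ _).isInfix hfac
  · exact isFactor_infix (List.suffix_cons _ _).isInfix hfac

lemma not_occ_of_ne {x y : List A} {i : ℕ} (hx : OccursAt u x i) (hlen : x.length = y.length)
    (hne : y ≠ x) : ¬ OccursAt u y i := fun hy => hne (occursAt_length_eq hy hx hlen.symm)

lemma edges_exist (hrich : Rich u) (hcur : ClosedUnderReversal u) {w : List A}
    (hw : IsFactor u w) :
    ∃ E : ℕ → A × A,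
      (∀ m, E m ∈ Bext u w) ∧
      (∀ m, (E m).1 ∈ Lext u w ∧ (E m).2 ∈ Rext u w) ∧
      (w.reverse = w → ∀ m, (E m).2 = (E (m + 1)).1) ∧
      (w.reverse ≠ w → ∀ m, (E m).1 = (E (m + 1)).1 ∨ (E m).2 = (E (m + 1)).2) ∧
      (∀ a ∈ Lext u w, ∃ m, (E m).1 = a) ∧
      (∀ b ∈ Rext u w, ∃ m, (E m).2 = b) := by
  classical
  set n := w.length with hn
  have hD : ∀ N : ℕ, ∃ i, N + 1 ≤ i ∧ (OccursAt u w i ∨ OccursAt u w.reverse i) := by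
    intro N
    obtain ⟨i, hi1, hi2⟩ := recur hcur hw (N + 1)
    exact ⟨i, hi1, Or.inl hi2⟩
  set o : ℕ → ℕ := fun m => Nat.rec (Nat.find (hD 0)) (fun _ prev => Nat.find (hD prev)) m
    with ho
  have hosucc : ∀ m, o (m + 1) = Nat.find (hD (o m)) := fun m => rfl
  have hoD : ∀ m, OccursAt u w (o m) ∨ OccursAt u w.reverse (o m) := by
    intro m
    cases m with
    | zero => exact (Nat.find_spec (hD 0)).2
    | succ m => exact (Nat.find_spec (hD (o m))).2
  have hopos : ∀ m, 1 ≤ o m := by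
    intro m
    cases m with
    | zero => exact le_trans (by omega) (Nat.find_spec (hD 0)).1
    | succ m =>
      have := (Nat.find_spec (hD (o m))).1
      rw [hosucc]
      omega
  have homono : ∀ m, o m < o (m + 1) := by
    intro m
    have := (Nat.find_spec (hD (o m))).1
    rw [hosucc]
    omega
  have hogap : ∀ m l, o m < l → l < o (m + 1) →
      ¬ (OccursAt u w l ∨ OccursAt u w.reverse l) := by
    intro m l h1 h2 hDl
    rw [hosucc] at h2
    exact Nat.find_min (hD (o m)) h2 ⟨by omega, hDl⟩
  have hosurj : ∀ i, 1 ≤ i → (OccursAt u w i ∨ OccursAt u w.reverse i) → ∃ m, o m = i := by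
    intro i hi hDi
    have h0le : o 0 ≤ i := Nat.find_le ⟨by omega, hDi⟩
    have hgrow : ∀ m, m + 1 ≤ o m := by
      intro m
      induction m with
      | zero => exact hopos 0
      | succ m ih => have := homono m; omega
    by_contra hno
    push_neg at hno
    set mg := Nat.findGreatest (fun m => o m ≤ i) i with hmg
    have hPmg : o mg ≤ i := Nat.findGreatest_spec (P := fun m => o m ≤ i) (n := i) (m := 0) (by omega) h0le
    have hlt : o mg < i := lt_of_le_of_ne hPmg (hno mg)
    have hnext : o (mg + 1) ≤ i := by
      rw [hosucc]
      exact Nat.find_le ⟨by omega, hDi⟩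
    have hbound : mg + 1 ≤ i := by have := hgrow mg; omega
    have := Nat.findGreatest_is_greatest (show mg < mg + 1 by omega) hbound
    exact this hnext
  set E : ℕ → A × A := fun m =>
    if OccursAt u w (o m) then (u (o m - 1), u (o m + n)) else (u (o m + n), u (o m - 1))
    with hE
  -- membership in Bext
  have hmem1 : ∀ i, 1 ≤ i → OccursAt u w i → (u (i - 1), u (i + n)) ∈ Bext u w := by
    intro i hi hocc
    exact ⟨i - 1, ext_occ hi hocc⟩
  have hmem2 : ∀ i, 1 ≤ i → OccursAt u w.reverse i → (u (i + n), u (i - 1)) ∈ Bext u w := by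
    intro i hi hocc
    have h1 : IsFactor u (u (i - 1) :: (w.reverse ++ [u (i + n)])) := by
      have := ext_occ hi hocc
      rw [List.length_reverse] at this
      exact ⟨i - 1, this⟩
    have h2 := hcur _ h1
    rw [rev_ext, List.reverse_reverse] at h2
    exact h2
  have hEmem : ∀ m, E m ∈ Bext u w := by
    intro m
    by_cases h : OccursAt u w (o m)
    · simp only [hE, if_pos h]
      exact hmem1 (o m) (hopos m) h
    · simp only [hE, if_neg h]
      rcases hoD m with h' | h'
      · exact absurd h' h
      · exact hmem2 (o m) (hopos m) h'
  refine ⟨E, hEmem, fun m => bext_mem_ext (hEmem m), ?_, ?_, ?_, ?_⟩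
  · -- palindromic sharing
    intro hpal m
    have hjw : OccursAt u w (o m) := by
      rcases hoD m with h | h
      · exact h
      · rwa [hpal] at h
    have hkw : OccursAt u w (o (m + 1)) := by
      rcases hoD (m + 1) with h | h
      · exact h
      · rwa [hpal] at h
    have hkey := CRkey hrich (v := w) hjw (by rw [hpal]; exact hkw) (homono m)
      (fun l h1 h2 hocc => hogap m l h1 h2 (Or.inl hocc))
    simp only [hE, if_pos hjw, if_pos hkw]
    exact hkey
  · -- non-palindromic sharing
    intro hnp m
    by_cases hj : OccursAt u w (o m) <;> by_cases hk : OccursAt u w (o (m + 1))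
    · -- both w : impossible
      exfalso
      refine CR3 hrich (v := w) hnp hj hk (homono m) ?_
      intro l h1 h2 hocc
      rcases eq_or_lt_of_le h1 with rfl | h1'
      · exact not_occ_of_ne hj (by rw [List.length_reverse]) hnp hocc
      · rcases eq_or_lt_of_le h2 with rfl | h2'
        · exact not_occ_of_ne hk (by rw [List.length_reverse]) hnp hocc
        · exact hogap m l h1' h2' (Or.inr hocc)
    · -- w then w.reverse
      have hk' : OccursAt u w.reverse (o (m + 1)) := by
        rcases hoD (m + 1) with h | h
        · exact absurd h hk
        · exact h
      have hkey := CRkey hrich (v := w) hj hk' (homono m)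
        (fun l h1 h2 hocc => hogap m l h1 h2 (Or.inl hocc))
      simp only [hE, if_pos hj, if_neg hk]
      exact Or.inr hkey
    · -- w.reverse then w
      have hj' : OccursAt u w.reverse (o m) := by
        rcases hoD m with h | h
        · exact absurd h hj
        · exact h
      have hkey := CRkey hrich (v := w.reverse) hj' (by rw [List.reverse_reverse]; exact hk)
        (homono m) (fun l h1 h2 hocc => hogap m l h1 h2 (Or.inr hocc))
      rw [List.length_reverse] at hkey
      simp only [hE, if_neg hj, if_pos hk]
      exact Or.inl hkey
    · -- both w.reverse : impossible
      exfalso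
      have hj' : OccursAt u w.reverse (o m) := by
        rcases hoD m with h | h
        · exact absurd h hj
        · exact h
      have hk' : OccursAt u w.reverse (o (m + 1)) := by
        rcases hoD (m + 1) with h | h
        · exact absurd h hk
        · exact h
      have hnp' : w.reverse.reverse ≠ w.reverse := by
        rw [List.reverse_reverse]
        intro hc
        exact hnp hc.symm
      refine CR3 hrich (v := w.reverse) hnp' hj' hk' (homono m) ?_
      intro l h1 h2 hocc
      rw [List.reverse_reverse] at hocc
      rcases eq_or_lt_of_le h1 with rfl | h1'
      · exact not_occ_of_ne hj' (by rw [List.length_reverse]) (fun hc => hnp hc.symm) hocc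
      · rcases eq_or_lt_of_le h2 with rfl | h2'
        · exact not_occ_of_ne hk' (by rw [List.length_reverse]) (fun hc => hnp hc.symm) hocc
        · exact hogap m l h1' h2' (Or.inl hocc)
  · -- left coverage
    intro a ha
    obtain ⟨i, hi1, hi2⟩ := recur hcur ha 1
    have hcons := occursAt_cons_iff.1 hi2
    have hw1 : OccursAt u w (i + 1) := hcons.2
    obtain ⟨m, hm⟩ := hosurj (i + 1) (by omega) (Or.inl hw1)
    refine ⟨m, ?_⟩
    simp only [hE, hm, if_pos hw1]
    have h3 : i + 1 - 1 = i := by omega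
    rw [h3]
    exact hcons.1
  · -- right coverage
    intro b hb
    obtain ⟨i, hi1, hi2⟩ := recur hcur hb 1
    have happ := occursAt_append_iff.1 hi2
    have hw1 : OccursAt u w i := happ.1
    have hb1 : u (i + n) = b := (occursAt_cons_iff.1 happ.2).1
    obtain ⟨m, hm⟩ := hosurj i (by omega) (Or.inl hw1)
    refine ⟨m, ?_⟩
    simp only [hE, hm, if_pos hw1]
    exact hb1

end Main
/-- If `u` is rich with language closed under reversal, then every
bispecial factor `w` satisfies: `b(w) ≥ 0` when `w` is non-palindromic, and
`b(w) ≥ #Pext(w) − 1` when `w` is a palindrome. -/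
theorem stmt9 {A : Type*} [Fintype A] (u : ℕ → A)
    (hall : AllLettersOccur u)
    (hrich : Rich u)
    (hcur : ClosedUnderReversal u) :
    ∀ w : List A, Bispecial u w →
      (w.reverse ≠ w → 0 ≤ bilateralOrder u w) ∧
      (w.reverse = w → (Set.ncard (Pext u w) : ℤ) - 1 ≤ bilateralOrder u w) := by
  classical
  intro w hbs
  obtain ⟨hwfac, hL2, hR2⟩ := hbs
  obtain ⟨E, hEmem, hEends, hshpal, hshnp, hcovL, hcovR⟩ := edges_exist hrich hcur hwfac
  have hLfin : (Lext u w).Finite := Set.toFinite _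
  have hRfin : (Rext u w).Finite := Set.toFinite _
  have hBfin : (Bext u w).Finite := Set.toFinite _
  set LF := hLfin.toFinset with hLFdef
  set RF := hRfin.toFinset with hRFdef
  set BF := hBfin.toFinset with hBFdef
  have hLcard : (Lext u w).ncard = LF.card := Set.ncard_eq_toFinset_card _ hLfin
  have hRcard : (Rext u w).ncard = RF.card := Set.ncard_eq_toFinset_card _ hRfin
  have hBcard : (Bext u w).ncard = BF.card := Set.ncard_eq_toFinset_card _ hBfin
  constructor
  · -- non-palindromic case
    intro hnp
    set e' : ℕ → ((A ⊕ A) × (A ⊕ A)) := fun m => (Sum.inl (E m).1, Sum.inr (E m).2) with he'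
    set S : Finset (A ⊕ A) := LF.image Sum.inl ∪ RF.image Sum.inr with hS
    set F : Finset ((A ⊕ A) × (A ⊕ A)) :=
      BF.image (fun p => (Sum.inl p.1, Sum.inr p.2)) ∪
      BF.image (fun p => (Sum.inr p.2, Sum.inl p.1)) with hF
    have hFmem : ∀ m, e' m ∈ F := by
      intro m
      apply Finset.mem_union_left
      exact Finset.mem_image.2 ⟨E m, (Set.Finite.mem_toFinset _).2 (hEmem m), rfl⟩
    have hFsym : ∀ p ∈ F, (p.2, p.1) ∈ F := by
      intro p hp
      rcases Finset.mem_union.1 hp with hp1 | hp1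
      · obtain ⟨q, hq, rfl⟩ := Finset.mem_image.1 hp1
        exact Finset.mem_union_right _ (Finset.mem_image.2 ⟨q, hq, rfl⟩)
      · obtain ⟨q, hq, rfl⟩ := Finset.mem_image.1 hp1
        exact Finset.mem_union_left _ (Finset.mem_image.2 ⟨q, hq, rfl⟩)
    have hends : ∀ m, (e' m).1 ∈ S ∧ (e' m).2 ∈ S := by
      intro m
      constructor
      · exact Finset.mem_union_left _ (Finset.mem_image.2
          ⟨(E m).1, (Set.Finite.mem_toFinset _).2 (hEends m).1, rfl⟩)
      · exact Finset.mem_union_right _ (Finset.mem_image.2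
          ⟨(E m).2, (Set.Finite.mem_toFinset _).2 (hEends m).2, rfl⟩)
    have hsh : ∀ m, (e' m).1 = (e' (m + 1)).1 ∨ (e' m).1 = (e' (m + 1)).2 ∨
        (e' m).2 = (e' (m + 1)).1 ∨ (e' m).2 = (e' (m + 1)).2 := by
      intro m
      rcases hshnp hnp m with h | h
      · exact Or.inl (congrArg Sum.inl h)
      · exact Or.inr (Or.inr (Or.inr (congrArg Sum.inr h)))
    have hcov : ∀ v ∈ S, ∃ m, (e' m).1 = v ∨ (e' m).2 = v := by
      intro v hv
      rcases Finset.mem_union.1 hv with hv1 | hv1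
      · obtain ⟨a, ha, rfl⟩ := Finset.mem_image.1 hv1
        obtain ⟨m, hm⟩ := hcovL a ((Set.Finite.mem_toFinset _).1 ha)
        exact ⟨m, Or.inl (congrArg Sum.inl hm)⟩
      · obtain ⟨b, hb, rfl⟩ := Finset.mem_image.1 hv1
        obtain ⟨m, hm⟩ := hcovR b ((Set.Finite.mem_toFinset _).1 hb)
        exact ⟨m, Or.inr (congrArg Sum.inr hm)⟩
    have key := chainCount2 e' S F hFmem hFsym hends hsh hcov
    have hScard : S.card = LF.card + RF.card := by
      rw [hS, Finset.card_union_of_disjoint, Finset.card_image_of_injective _ Sum.inl_injective,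
        Finset.card_image_of_injective _ Sum.inr_injective]
      rw [Finset.disjoint_left]
      rintro x hx1 hx2
      obtain ⟨a, _, rfl⟩ := Finset.mem_image.1 hx1
      obtain ⟨b, _, hc⟩ := Finset.mem_image.1 hx2
      exact Sum.inr_ne_inl hc
    have hFall : F.filter (fun p => p.1 ≠ p.2) = F := by
      apply Finset.filter_true_of_mem
      intro p hp
      rcases Finset.mem_union.1 hp with hp1 | hp1
      · obtain ⟨q, _, rfl⟩ := Finset.mem_image.1 hp1
        simp
      · obtain ⟨q, _, rfl⟩ := Finset.mem_image.1 hp1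
        simp
    have hinj1 : Function.Injective (fun p : A × A => ((Sum.inl p.1 : A ⊕ A), (Sum.inr p.2 : A ⊕ A))) := by
      intro p q h
      simp only [Prod.mk.injEq, Sum.inl.injEq, Sum.inr.injEq] at h
      exact Prod.ext h.1 h.2
    have hinj2 : Function.Injective (fun p : A × A => ((Sum.inr p.2 : A ⊕ A), (Sum.inl p.1 : A ⊕ A))) := by
      intro p q h
      simp only [Prod.mk.injEq, Sum.inl.injEq, Sum.inr.injEq] at h
      exact Prod.ext h.2 h.1
    have hdisjF : Disjoint (BF.image (fun p => ((Sum.inl p.1 : A ⊕ A), (Sum.inr p.2 : A ⊕ A))))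
        (BF.image (fun p => ((Sum.inr p.2 : A ⊕ A), (Sum.inl p.1 : A ⊕ A)))) := by
      rw [Finset.disjoint_left]
      rintro x hx1 hx2
      obtain ⟨p, _, rfl⟩ := Finset.mem_image.1 hx1
      obtain ⟨q, _, hc⟩ := Finset.mem_image.1 hx2
      have := congrArg Prod.fst hc
      exact Sum.inr_ne_inl this
    have hFcard : F.card = BF.card + BF.card := by
      rw [hF, Finset.card_union_of_disjoint hdisjF, Finset.card_image_of_injective _ hinj1,
        Finset.card_image_of_injective _ hinj2]
    rw [hFall, hFcard] at key
    rw [hScard] at key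
    unfold bilateralOrder
    rw [hLcard, hRcard, hBcard]
    omega
  · -- palindromic case
    intro hpal
    have hLR : Lext u w = Rext u w := by
      ext a
      simp only [Lext, Rext, Set.mem_setOf_eq]
      constructor
      · intro h
        have h2 := hcur _ h
        rwa [List.reverse_cons, hpal] at h2
      · intro h
        have h2 := hcur _ h
        rwa [List.reverse_append, List.reverse_singleton, hpal, List.singleton_append] at h2
    have hRFLF : RF = LF := by
      ext a
      rw [hRFdef, hLFdef, Set.Finite.mem_toFinset, Set.Finite.mem_toFinset, hLR]
    have hFsymB : ∀ p ∈ BF, (p.2, p.1) ∈ BF := by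
      intro p hp
      rw [Set.Finite.mem_toFinset] at hp ⊢
      have h1 : IsFactor u (p.1 :: (w ++ [p.2])) := hp
      have h2 := hcur _ h1
      rw [rev_ext, hpal] at h2
      exact h2
    have hFmem : ∀ m, E m ∈ BF := fun m => (Set.Finite.mem_toFinset _).2 (hEmem m)
    have hends : ∀ m, (E m).1 ∈ LF ∧ (E m).2 ∈ LF := by
      intro m
      constructor
      · exact (Set.Finite.mem_toFinset _).2 (hEends m).1
      · refine (Set.Finite.mem_toFinset _).2 ?_
        rw [hLR]
        exact (hEends m).2
    have hsh : ∀ m, (E m).1 = (E (m + 1)).1 ∨ (E m).1 = (E (m + 1)).2 ∨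
        (E m).2 = (E (m + 1)).1 ∨ (E m).2 = (E (m + 1)).2 := by
      intro m
      exact Or.inr (Or.inr (Or.inl (hshpal hpal m)))
    have hcov : ∀ v ∈ LF, ∃ m, (E m).1 = v ∨ (E m).2 = v := by
      intro v hv
      obtain ⟨m, hm⟩ := hcovL v ((Set.Finite.mem_toFinset _).1 hv)
      exact ⟨m, Or.inl hm⟩
    have key := chainCount2 E LF BF hFmem hFsymB hends hsh hcov
    -- count loops
    have hdfin : ({a : A | (a, a) ∈ Bext u w}).Finite := Set.toFinite _
    set DF := hdfin.toFinset with hDFdef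
    have hPextEq : Pext u w = (fun a => a :: (w ++ [a])) '' {a | (a, a) ∈ Bext u w} := by
      ext v
      simp only [Pext, Set.mem_setOf_eq, Set.mem_image]
      constructor
      · rintro ⟨a, rfl, hf⟩
        exact ⟨a, hf, rfl⟩
      · rintro ⟨a, ha, rfl⟩
        exact ⟨a, rfl, ha⟩
    have hPcard : (Pext u w).ncard = DF.card := by
      rw [hPextEq, Set.ncard_image_of_injective _ (fun a b h => by
        injection h)]
      exact Set.ncard_eq_toFinset_card _ hdfin
    have hloopEq : BF.filter (fun p => p.1 = p.2) = DF.image (fun a => (a, a)) := by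
      ext p
      constructor
      · intro hp0
        obtain ⟨hp, heq⟩ := Finset.mem_filter.1 hp0
        have hpp : ((p.1 : A), p.1) = p := Prod.ext rfl heq
        refine Finset.mem_image.2 ⟨p.1, ?_, hpp⟩
        refine (Set.Finite.mem_toFinset _).2 ?_
        show (p.1, p.1) ∈ Bext u w
        rw [hpp]
        exact (Set.Finite.mem_toFinset _).1 hp
      · intro hp0
        obtain ⟨a, ha, rfl⟩ := Finset.mem_image.1 hp0
        refine Finset.mem_filter.2 ⟨?_, rfl⟩
        refine (Set.Finite.mem_toFinset _).2 ?_
        have h9 : a ∈ {a : A | (a, a) ∈ Bext u w} := (Set.Finite.mem_toFinset hdfin).1 ha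
        exact h9
    have hloopcard : (BF.filter (fun p => p.1 = p.2)).card = DF.card := by
      rw [hloopEq]
      exact Finset.card_image_of_injective _ (fun a b h => congrArg Prod.fst h)
    have hsplit := Finset.card_filter_add_card_filter_not
      (s := BF) (p := fun p => p.1 = p.2)
    have hnlEq : BF.filter (fun p => ¬ p.1 = p.2) = BF.filter (fun p => p.1 ≠ p.2) := by
      apply Finset.filter_congr
      intro x _
      rfl
    rw [hnlEq] at hsplit
    unfold bilateralOrder
    rw [hLcard, hRcard, hBcard, hPcard, hRFLF]
    omega
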